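/- arXiv:1810.04190 — 2 statements merged into one kernel-verified Lean document; each statement's English description precedes it below -/
import Mathlib

section
/- Counting characterization of satisfaction: In the setting above (finite S, finite index set I, families C_s ⊆ 𝒫(S) each containing ∅, cover-boundaries C̃_s, C̃ = ⋃_s C̃_s, I_T = {s : T ∈ C̃_s}, and for T ∈ C̃, s ∈ I_T, H_{T,s} = {U ∈ C_s : T ⊊ U} with f_{T,s} : H_{T,s} → ℤ the unique function with ∑_{W ⊆ U, W ∈ H_{T,s}} f_{T,s}(W) = 1 for all U ∈ H_{T,s}): if B ∈ C_s for all s ∈ I, then for every T ∈ C̃ with T ⊆ B, ∑_{s ∈ I_T} ∑_{W ∈ H_{T,s}, W ⊆ B} f_{T,s}(W) = |I_T|; whereas if B ∉ C_s for some s, then with T_B as given by the maximal-witness lemma, ∑_{s ∈ I_{T_B}} ∑_{W ∈ H_{T_B,s}, W ⊆ B} f_{T_B,s}(W) < |I_{T_B}|. -/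
/-!
Fix `B`. If `B` lies in every `C s`, then for a boundary set `T ⊆ B` of `C s` we have `T ⊊ B`,
so `B` itself belongs to `H_{T,s}` and the inner sum is the Möbius-inversion identity at `U = B`,
which equals `1`. If `B ∉ C s₀`, climbing from `∅ ∈ C s₀` inside `B` through `C s₀` until no
further element fits produces a boundary set of `C s₀` inside `B`; take `T_B` of maximal size
among the boundary sets `T ⊆ B` of those `C s` that miss `B`. For such an `s` no `W ∈ C s` with
`T_B ⊊ W ⊆ B` exists, since climbing from `W` would give a larger boundary set. So those inner
sums are empty, and the remaining ones are `1`.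
-/

open scoped Classical

open Finset

section

variable {α ι : Type*} [DecidableEq α]

/-- The paper's `C̃_s` is `{U | U ⊆ S ∧ IsCoverBoundary (C s) U}`. -/
def IsCoverBoundary (Cs : Finset (Finset α)) (U : Finset α) : Prop :=
  U ∉ Cs ∧ ∃ W ∈ Cs, W ⊆ U ∧ (U \ W).card = 1

theorem exists_isCoverBoundary_of_subset {Cs : Finset (Finset α)} {B W₀ : Finset α}
    (hB : B ∉ Cs) (hW₀ : W₀ ∈ Cs) (hW₀B : W₀ ⊆ B) :
    ∃ T, W₀ ⊂ T ∧ T ⊆ B ∧ IsCoverBoundary Cs T := by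
  obtain ⟨W, hW, hWmax⟩ := (Cs.filter fun W => W₀ ⊆ W ∧ W ⊆ B).exists_max_image card
    ⟨W₀, mem_filter.2 ⟨hW₀, subset_rfl, hW₀B⟩⟩
  obtain ⟨hWC, hW₀W, hWB⟩ := mem_filter.1 hW
  obtain ⟨x, hxB, hxW⟩ := exists_of_ssubset (hWB.ssubset_of_ne fun h => hB (h ▸ hWC))
  have hxWB : insert x W ⊆ B := insert_subset hxB hWB
  refine ⟨insert x W, hW₀W.trans_ssubset (ssubset_insert hxW), hxWB, fun hxWC => ?_,
    W, hWC, subset_insert x W, by rw [insert_sdiff_cancel hxW, card_singleton]⟩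
  exact (card_lt_card (ssubset_insert hxW)).not_ge
    (hWmax _ (mem_filter.2 ⟨hxWC, hW₀W.trans (subset_insert x W), hxWB⟩))

/-- The maximal-witness lemma; `T` is the paper's `T_B`. -/
theorem exists_maximal_witness {I : Finset ι} {C : ι → Finset (Finset α)} {B : Finset α}
    (hempty : ∀ s ∈ I, ∅ ∈ C s) (hviol : ∃ s ∈ I, B ∉ C s) :
    ∃ T ⊆ B, (∃ s ∈ I, IsCoverBoundary (C s) T ∧ B ∉ C s) ∧
      ∀ s ∈ I, B ∉ C s → ∀ W ∈ C s, T ⊂ W → ¬W ⊆ B := by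
  set witnesses := B.powerset.filter fun T => ∃ s ∈ I, IsCoverBoundary (C s) T ∧ B ∉ C s
  have mem_witnesses {s T} (hs : s ∈ I) (hTB : T ⊆ B) (hT : IsCoverBoundary (C s) T)
      (hBs : B ∉ C s) : T ∈ witnesses :=
    mem_filter.2 ⟨mem_powerset.2 hTB, s, hs, hT, hBs⟩
  obtain ⟨s₀, hs₀, hBs₀⟩ := hviol
  obtain ⟨T₀, -, hT₀B, hT₀⟩ :=
    exists_isCoverBoundary_of_subset hBs₀ (hempty s₀ hs₀) (empty_subset B)
  obtain ⟨T, hT, hTmax⟩ :=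
    witnesses.exists_max_image card ⟨T₀, mem_witnesses hs₀ hT₀B hT₀ hBs₀⟩
  obtain ⟨hTB, hTwit⟩ := mem_filter.1 hT
  refine ⟨T, mem_powerset.1 hTB, hTwit, fun s hs hBs W hW hTW hWB => ?_⟩
  obtain ⟨T', hWT', hT'B, hT'⟩ := exists_isCoverBoundary_of_subset hBs hW hWB
  exact (card_lt_card (hTW.trans hWT')).not_ge (hTmax T' (mem_witnesses hs hT'B hT' hBs))

end

theorem counting_characterization_general {α ι : Type*} [DecidableEq α]
    (S : Finset α) (I : Finset ι) (C : ι → Finset (Finset α))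
    (hempty : ∀ s ∈ I, ∅ ∈ C s)
    (Ct : ι → Set (Finset α))
    (hCt : ∀ s, Ct s =
      {U | U ⊆ S ∧ U ∉ C s ∧ ∃ W ∈ C s, W ⊆ U ∧ (U \ W).card = 1})
    (f : Finset α → ι → Finset α → ℤ)
    (hf1 : ∀ T : Finset α, ∀ s ∈ I, ∀ U ∈ (C s).filter (fun U => T ⊂ U),
      ∑ W ∈ ((C s).filter (fun U' => T ⊂ U')).filter (· ⊆ U), f T s W = 1)
    (B : Finset α) (hB : B ⊆ S) :
    ((∀ s ∈ I, B ∈ C s) →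
      ∀ T : Finset α, T ⊆ B → (∃ s ∈ I, T ∈ Ct s) →
        ∑ s ∈ I.filter (fun s => T ∈ Ct s),
            ∑ W ∈ ((C s).filter (fun U => T ⊂ U)).filter (· ⊆ B), f T s W =
          ((I.filter (fun s => T ∈ Ct s)).card : ℤ)) ∧
    ((∃ s ∈ I, B ∉ C s) →
      ∃ T : Finset α, T ⊆ B ∧ (∃ s ∈ I, T ∈ Ct s ∧ B ∉ C s) ∧
        ∑ s ∈ I.filter (fun s => T ∈ Ct s),
            ∑ W ∈ ((C s).filter (fun U => T ⊂ U)).filter (· ⊆ B), f T s W <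
          ((I.filter (fun s => T ∈ Ct s)).card : ℤ)) := by
  have mem_Ct {s T} : T ∈ Ct s ↔ T ⊆ S ∧ IsCoverBoundary (C s) T := by
    rw [hCt s]; rfl
  have inner_eq_one {s T} (hs : s ∈ I) (hBs : B ∈ C s) (hTB : T ⊆ B) (hT : T ∈ Ct s) :
      ∑ W ∈ ((C s).filter (fun U => T ⊂ U)).filter (· ⊆ B), f T s W = 1 :=
    hf1 T s hs B (mem_filter.2 ⟨hBs, hTB.ssubset_of_ne fun h => (mem_Ct.1 hT).2.1 (h ▸ hBs)⟩)
  refine ⟨fun hsat T hTB _ => ?_, fun hviol => ?_⟩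
  · rw [card_eq_sum_ones, Nat.cast_sum, Nat.cast_one]
    refine sum_congr rfl fun s hs => ?_
    obtain ⟨hsI, hT⟩ := mem_filter.1 hs
    exact inner_eq_one hsI (hsat s hsI) hTB hT
  · obtain ⟨T, hTB, ⟨s₁, hs₁, hTs₁, hBs₁⟩, hmax⟩ := exists_maximal_witness hempty hviol
    have inner_eq_zero {s} (hs : s ∈ I) (hBs : B ∉ C s) :
        ∑ W ∈ ((C s).filter (fun U => T ⊂ U)).filter (· ⊆ B), f T s W = 0 :=
      sum_eq_zero fun W hW => by
        simp only [mem_filter] at hW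
        exact absurd hW.2 (hmax s hs hBs W hW.1.1 hW.1.2)
    have hTs₁' : T ∈ Ct s₁ := mem_Ct.2 ⟨hTB.trans hB, hTs₁⟩
    refine ⟨T, hTB, ⟨s₁, hs₁, hTs₁', hBs₁⟩, ?_⟩
    rw [card_eq_sum_ones, Nat.cast_sum, Nat.cast_one]
    refine sum_lt_sum (fun s hs => ?_) ⟨s₁, mem_filter.2 ⟨hs₁, hTs₁'⟩, ?_⟩
    · obtain ⟨hsI, hT⟩ := mem_filter.1 hs
      by_cases hBs : B ∈ C s
      · exact (inner_eq_one hsI hBs hTB hT).le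
      · exact (inner_eq_zero hsI hBs).trans_le zero_le_one
    · exact (inner_eq_zero hs₁ hBs₁).trans_lt one_pos

/-- Counting characterization of satisfaction: if `B` satisfies all constraints then
for every `T ∈ C̃` with `T ⊆ B` the double sum equals `|I_T|`; if `B` violates some
constraint, then for a maximal witness `T_B` the double sum is strictly less than
`|I_{T_B}|`. -/
theorem counting_characterization {α ι : Type*} [DecidableEq α]
    (S : Finset α) (I : Finset ι) (C : ι → Finset (Finset α))
    (hCS : ∀ s ∈ I, ∀ W ∈ C s, W ⊆ S)
    (hempty : ∀ s ∈ I, ∅ ∈ C s)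
    (Ct : ι → Set (Finset α))
    (hCt : ∀ s, Ct s =
      {U | U ⊆ S ∧ U ∉ C s ∧ ∃ W ∈ C s, W ⊆ U ∧ (U \ W).card = 1})
    (f : Finset α → ι → Finset α → ℤ)
    (hf1 : ∀ T : Finset α, ∀ s ∈ I, ∀ U ∈ (C s).filter (fun U => T ⊂ U),
      ∑ W ∈ ((C s).filter (fun U' => T ⊂ U')).filter (· ⊆ U), f T s W = 1)
    (B : Finset α) (hB : B ⊆ S) :
    ((∀ s ∈ I, B ∈ C s) →
      ∀ T : Finset α, T ⊆ B → (∃ s ∈ I, T ∈ Ct s) →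
        ∑ s ∈ I.filter (fun s => T ∈ Ct s),
            ∑ W ∈ ((C s).filter (fun U => T ⊂ U)).filter (· ⊆ B), f T s W =
          ((I.filter (fun s => T ∈ Ct s)).card : ℤ)) ∧
    ((∃ s ∈ I, B ∉ C s) →
      ∃ T : Finset α, T ⊆ B ∧ (∃ s ∈ I, T ∈ Ct s ∧ B ∉ C s) ∧
        ∑ s ∈ I.filter (fun s => T ∈ Ct s),
            ∑ W ∈ ((C s).filter (fun U => T ⊂ U)).filter (· ⊆ B), f T s W <
          ((I.filter (fun s => T ∈ Ct s)).card : ℤ)) :=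
  counting_characterization_general S I C hempty Ct hCt f hf1 B hB
end

section
/- Boundedness of the inversion function f_{T,s}: Let H be a finite family of finite sets, each of size at most k, ordered by inclusion, and let f : H → ℤ be the unique function with ∑_{W ∈ H, W ⊆ U} f(W) = 1 for all U ∈ H. Then there is a computable function h : ℕ → ℕ (depending only on k) such that |f(W)| ≤ h(k) for all W ∈ H. -/
open scoped Classical

/-!
Since `∑_{W ≤ U} f W = 1`, each value is determined by those strictly below it:
`f W = 1 - ∑_{U < W} f U`. Inducting on a strictly monotone rank (here the cardinality,
at most `k`), and using that `W` has at most `m = 2 ^ k` strict predecessors (its subsets),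
gives `|f W| ≤ 1 + m + ⋯ + m ^ k`.
-/

open Finset

section PartialOrder

variable {β : Type*} [PartialOrder β] [DecidableLE β] [DecidableLT β]

lemma eq_one_sub_sum_filter_lt {H : Finset β} {f : β → ℤ}
    (hf : ∀ U ∈ H, ∑ W ∈ H.filter (· ≤ U), f W = 1) {W : β} (hW : W ∈ H) :
    f W = 1 - ∑ U ∈ H.filter (· < W), f U := by
  have hsplit : H.filter (· ≤ W) = insert W (H.filter (· < W)) := by
    ext U
    simp only [mem_filter, mem_insert, le_iff_lt_or_eq]
    constructor
    · rintro ⟨hU, hlt | rfl⟩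
      exacts [Or.inr ⟨hU, hlt⟩, Or.inl rfl]
    · rintro (rfl | ⟨hU, hlt⟩)
      exacts [⟨hW, Or.inr rfl⟩, ⟨hU, Or.inl hlt⟩]
  have hsum := hf W hW
  rw [hsplit, sum_insert (by simp)] at hsum
  linarith

theorem natAbs_le_geom_sum_of_strictMono {H : Finset β} {f : β → ℤ}
    (hf : ∀ U ∈ H, ∑ W ∈ H.filter (· ≤ U), f W = 1) {r : β → ℕ} (hr : StrictMono r) {m : ℕ}
    (hm : ∀ W ∈ H, #(H.filter (· < W)) ≤ m) :
    ∀ n, ∀ W ∈ H, r W < n → (f W).natAbs ≤ ∑ i ∈ range n, m ^ i := by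
  intro n
  induction n with
  | zero => simp
  | succ n ih =>
    intro W hW hrW
    have hpred : ∀ U ∈ H.filter (· < W), (f U).natAbs ≤ ∑ i ∈ range n, m ^ i := by
      intro U hU
      rw [mem_filter] at hU
      exact ih U hU.1 (by have := hr hU.2; omega)
    calc (f W).natAbs = (1 - ∑ U ∈ H.filter (· < W), f U).natAbs := by
          rw [← eq_one_sub_sum_filter_lt hf hW]
      _ ≤ 1 + ∑ U ∈ H.filter (· < W), (f U).natAbs :=
          (Int.natAbs_sub_le _ _).trans (Nat.add_le_add_left (Int.natAbs_sum_le _ _) 1)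
      _ ≤ 1 + #(H.filter (· < W)) * ∑ i ∈ range n, m ^ i :=
          Nat.add_le_add_left (by simpa only [smul_eq_mul] using sum_le_card_nsmul _ _ _ hpred) 1
      _ ≤ 1 + m * ∑ i ∈ range n, m ^ i := by gcongr; exact hm W hW
      _ = ∑ i ∈ range (n + 1), m ^ i := by rw [geom_sum_succ, add_comm]

end PartialOrder

lemma card_filter_ssubset_le {α : Type*} [DecidableEq α] (H : Finset (Finset α)) (W : Finset α) :
    #(H.filter (· ⊂ W)) ≤ 2 ^ #W :=
  calc #(H.filter (· ⊂ W)) ≤ #W.powerset :=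
        card_le_card fun _ hU ↦ mem_powerset.mpr (mem_filter.mp hU).2.subset
    _ = 2 ^ #W := card_powerset W

/-- Boundedness of the inversion function: if every member of `H` has size at most `k`
and `f` satisfies the normalization `∑_{W ∈ H, W ⊆ U} f W = 1` for all `U ∈ H`, then
`|f W|` is bounded by `h k` for some function `h` depending only on `k`. -/
theorem inversion_function_bound :
    ∃ h : ℕ → ℕ, ∀ (α : Type) [DecidableEq α] (H : Finset (Finset α)) (k : ℕ),
      (∀ A ∈ H, A.card ≤ k) →
      ∀ f : Finset α → ℤ,
        (∀ U ∈ H, ∑ W ∈ H.filter (· ⊆ U), f W = 1) →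
        ∀ W ∈ H, (f W).natAbs ≤ h k := by
  refine ⟨fun k ↦ ∑ i ∈ range (k + 1), (2 ^ k) ^ i, ?_⟩
  intro α _ H k hk f hf W hW
  have hpred : ∀ W ∈ H, #(H.filter (· < W)) ≤ 2 ^ k := fun W hW ↦
    (card_filter_ssubset_le H W).trans (Nat.pow_le_pow_right two_pos (hk W hW))
  exact natAbs_le_geom_sum_of_strictMono hf card_strictMono hpred (k + 1) W hW
    (Nat.lt_succ_of_le (hk W hW))
end
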